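/- Let F, G, H be finite groups, U a subgroup of F × G, and V a subgroup of G × H. Then |Γ(U,V)| = |Γ∩(U,V)| · |U * V|. -/

import Mathlib

open scoped Pointwise

section StarPrelude

variable {F G H I : Type*} [Group F] [Group G] [Group H] [Group I]
variable {A : Type*} [CommGroup A]

/-- The star product of subgroups `U ≤ F × G` and `V ≤ G × H`. -/
def starProd (U : Subgroup (F × G)) (V : Subgroup (G × H)) : Subgroup (F × H) where
  carrier := {p | ∃ g : G, (p.1, g) ∈ U ∧ (g, p.2) ∈ V}
  one_mem' := ⟨1, U.one_mem, V.one_mem⟩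
  mul_mem' := by
    rintro ⟨a, b⟩ ⟨c, d⟩ ⟨g, h1, h2⟩ ⟨g', h1', h2'⟩
    exact ⟨g * g', U.mul_mem h1 h1', V.mul_mem h2 h2'⟩
  inv_mem' := by
    rintro ⟨a, b⟩ ⟨g, h1, h2⟩
    exact ⟨g⁻¹, U.inv_mem h1, V.inv_mem h2⟩

infixl:70 " ⋆ " => starProd

theorem mem_starProd {U : Subgroup (F × G)} {V : Subgroup (G × H)} {p : F × H} :
    p ∈ U ⋆ V ↔ ∃ g : G, (p.1, g) ∈ U ∧ (g, p.2) ∈ V := Iff.rfl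

/-- `Γ(U,V) = {(f,g,h) : (f,g) ∈ U, (g,h) ∈ V}`. -/
def gammaSet (U : Subgroup (F × G)) (V : Subgroup (G × H)) : Set (F × G × H) :=
  {p | (p.1, p.2.1) ∈ U ∧ (p.2.1, p.2.2) ∈ V}

/-- `Γ∩(U,V) = {g ∈ G : (1,g) ∈ U and (g,1) ∈ V}`. -/
def gammaCap (U : Subgroup (F × G)) (V : Subgroup (G × H)) : Set G :=
  {g | ((1 : F), g) ∈ U ∧ (g, (1 : H)) ∈ V}

/-- `p₁(U)`, the image of `U ≤ F × G` in `F`. -/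
def proj1 (U : Subgroup (F × G)) : Subgroup F := U.map (MonoidHom.fst F G)

/-- `p₂(U)`, the image of `U ≤ F × G` in `G`. -/
def proj2 (U : Subgroup (F × G)) : Subgroup G := U.map (MonoidHom.snd F G)

/-- `k₁(U) = {f : (f,1) ∈ U}`. -/
def ker1 (U : Subgroup (F × G)) : Set F := {f | (f, (1 : G)) ∈ U}

/-- `k₂(U) = {g : (1,g) ∈ U}`. -/
def ker2 (U : Subgroup (F × G)) : Set G := {g | ((1 : F), g) ∈ U}

end StarPrelude


/-!
`Γ(U,V)` is a subgroup of `F × G × H`, and the projection `(f, g, h) ↦ (f, h)` maps it onto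
`U * V` with kernel `{(1, g, 1) : g ∈ Γ∩(U,V)}`; Lagrange's theorem for this kernel gives the formula.
-/

section Gamma

variable {F G H : Type*} [Group F] [Group G] [Group H]

def gammaSubgroup (U : Subgroup (F × G)) (V : Subgroup (G × H)) : Subgroup (F × G × H) where
  carrier := gammaSet U V
  one_mem' := ⟨U.one_mem, V.one_mem⟩
  mul_mem' := fun ⟨hu, hv⟩ ⟨hu', hv'⟩ => ⟨U.mul_mem hu hu', V.mul_mem hv hv'⟩
  inv_mem' := fun ⟨hu, hv⟩ => ⟨U.inv_mem hu, V.inv_mem hv⟩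

def gammaProj (U : Subgroup (F × G)) (V : Subgroup (G × H)) : gammaSubgroup U V →* F × H :=
  ((MonoidHom.fst F (G × H)).prod ((MonoidHom.snd G H).comp (MonoidHom.snd F (G × H)))).comp
    (gammaSubgroup U V).subtype

variable (U : Subgroup (F × G)) (V : Subgroup (G × H))

theorem range_gammaProj : (gammaProj U V).range = U ⋆ V := by
  ext ⟨f, h⟩
  constructor
  · rintro ⟨⟨⟨f', g, h'⟩, hu, hv⟩, hx⟩
    obtain ⟨rfl, rfl⟩ : f' = f ∧ h' = h := Prod.mk.inj hx
    exact ⟨g, hu, hv⟩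
  · rintro ⟨g, hu, hv⟩
    exact ⟨⟨(f, g, h), hu, hv⟩, rfl⟩

theorem mem_ker_gammaProj {x : gammaSubgroup U V} :
    x ∈ (gammaProj U V).ker ↔ x.1.1 = 1 ∧ x.1.2.2 = 1 := by
  simp [MonoidHom.mem_ker, gammaProj, Prod.ext_iff]

def gammaCapEquivKer : gammaCap U V ≃ (gammaProj U V).ker where
  toFun g := ⟨⟨(1, g.1, 1), g.2⟩, (mem_ker_gammaProj U V).2 ⟨rfl, rfl⟩⟩
  invFun x := ⟨x.1.1.2.1, by
    obtain ⟨⟨⟨f, g, h⟩, hu, hv⟩, hx⟩ := x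
    obtain ⟨rfl, rfl⟩ := (mem_ker_gammaProj U V).1 hx
    exact ⟨hu, hv⟩⟩
  left_inv _ := rfl
  right_inv := by
    rintro ⟨⟨⟨f, g, h⟩, hΓ⟩, hx⟩
    obtain ⟨rfl, rfl⟩ := (mem_ker_gammaProj U V).1 hx
    rfl

end Gamma

theorem stmt2_general {F G H : Type*} [Group F] [Group G] [Group H]
    (U : Subgroup (F × G)) (V : Subgroup (G × H)) :
    Nat.card (gammaSet U V) = Nat.card (gammaCap U V) * Nat.card (U ⋆ V) :=
  calc Nat.card (gammaSet U V)
      = Nat.card (gammaProj U V).ker * (gammaProj U V).ker.index :=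
        ((gammaProj U V).ker.card_mul_index).symm
    _ = Nat.card (gammaCap U V) * Nat.card (U ⋆ V) := by
        rw [Subgroup.index_ker, range_gammaProj, Nat.card_congr (gammaCapEquivKer U V)]

/-- For finite groups `F, G, H` and subgroups `U ≤ F × G`, `V ≤ G × H`:
`|Γ(U,V)| = |Γ∩(U,V)| · |U * V|`. -/
theorem stmt2 {F G H : Type*} [Group F] [Group G] [Group H]
    [Finite F] [Finite G] [Finite H]
    (U : Subgroup (F × G)) (V : Subgroup (G × H)) :
    Nat.card (gammaSet U V) = Nat.card (gammaCap U V) * Nat.card (U ⋆ V) :=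
  stmt2_general U V
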